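/- arXiv:2404.08447 — 6 statements merged into one kernel-verified Lean document; each statement's English description precedes it below -/
import Mathlib

section
/- Let (x_r) be a non-negative real sequence such that x_{r+1} - x_r ≤ a_{r+1} √(x_{r+1}) for all r ≥ 0, where a_i ≥ 0. Then for any R ≥ 1, x_R ≤ (√(x_0) + Σ_{r=1}^R a_r)^2 ≤ 2 x_0 + 2 (Σ_{r=1}^R a_r)^2. -/
lemma sqrt_step (x y a : ℝ) (hx : 0 ≤ x) (hy : 0 ≤ y) (ha : 0 ≤ a)
    (h : y - x ≤ a * Real.sqrt y) : Real.sqrt y ≤ Real.sqrt x + a := by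
  by_contra hc
  push_neg at hc
  have hsx := Real.sqrt_nonneg x
  have hsy := Real.sqrt_nonneg y
  have h1 : Real.sqrt y ^ 2 = y := Real.sq_sqrt hy
  have h2 : Real.sqrt x ^ 2 = x := Real.sq_sqrt hx
  nlinarith [mul_pos (sub_pos.mpr hc) (sub_pos.mpr hc)]

theorem stmt_0 (x a : ℕ → ℝ) (hx : ∀ r, 0 ≤ x r) (ha : ∀ i, 0 ≤ a i)
    (hrec : ∀ r, x (r + 1) - x r ≤ a (r + 1) * Real.sqrt (x (r + 1))) :
    ∀ R : ℕ, 1 ≤ R →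
      x R ≤ (Real.sqrt (x 0) + ∑ r ∈ Finset.Icc 1 R, a r) ^ 2 ∧
      (Real.sqrt (x 0) + ∑ r ∈ Finset.Icc 1 R, a r) ^ 2 ≤
        2 * x 0 + 2 * (∑ r ∈ Finset.Icc 1 R, a r) ^ 2 := by
  have key : ∀ R : ℕ, Real.sqrt (x R) ≤ Real.sqrt (x 0) + ∑ r ∈ Finset.Icc 1 R, a r := by
    intro R
    induction R with
    | zero => simp
    | succ n ih =>
      have := sqrt_step (x n) (x (n+1)) (a (n+1)) (hx n) (hx (n+1)) (ha (n+1)) (hrec n)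
      have hsum : ∑ r ∈ Finset.Icc 1 (n+1), a r = (∑ r ∈ Finset.Icc 1 n, a r) + a (n+1) := by
        exact Finset.sum_Icc_succ_top (by omega) a
      rw [hsum]; linarith
  intro R _
  have hsnn : 0 ≤ ∑ r ∈ Finset.Icc 1 R, a r := Finset.sum_nonneg fun i _ => ha i
  constructor
  · have h1 : x R = Real.sqrt (x R) ^ 2 := (Real.sq_sqrt (hx R)).symm
    rw [h1]
    exact pow_le_pow_left₀ (Real.sqrt_nonneg _) (key R) 2
  · have h2 : Real.sqrt (x 0) ^ 2 = x 0 := Real.sq_sqrt (hx 0)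
    nlinarith [sq_nonneg (Real.sqrt (x 0) - ∑ r ∈ Finset.Icc 1 R, a r)]
end

section
/- There exist n = 3 quadratic functions h_i(x) = (1/2) xᵀ A_i x on ℝ² with averaged first-order Hessian dissimilarity constant (1/3)Σ_i ‖∇h_i(x) − ∇h_i(y)‖² = (14/3)‖x−y‖² for all x,y, while (1/3)Σ_i ‖∇²h_i(x)‖² = 19/3 > 14/3 for all x; i.e., the first-order averaged Hessian dissimilarity bound can be strictly smaller than the second-order one. -/
/-!
The function `h_i x = ½ ⟪A_i x, x⟫` of a symmetric operator `A_i` has gradient `A_i x` and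
Hessian `A_i`. For diagonal `A_i = diag (a_i)`, `∑ i, ‖A_i z‖² = ∑ j, (∑ i, a_ij²) z_j²`, so the
first-order constant is governed by the column sums `∑ i, a_ij²`, which are both `14` here; the
operator norm `‖A_i‖ = max_j |a_ij|` instead picks the largest entry of each row separately,
giving `9 + 1 + 9 = 19`.
-/

open scoped RealInnerProductSpace Matrix.Norms.L2Operator

section Quadratic

variable {F : Type*} [NormedAddCommGroup F] [InnerProductSpace ℝ F]

noncomputable def quadratic (T : F →L[ℝ] F) (x : F) : ℝ := 2⁻¹ * ⟪T x, x⟫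

lemma contDiff_quadratic (T : F →L[ℝ] F) {n : WithTop ℕ∞} : ContDiff ℝ n (quadratic T) :=
  contDiff_const.mul (T.contDiff.inner ℝ contDiff_id)

variable [CompleteSpace F]

lemma hasGradientAt_quadratic {T : F →L[ℝ] F} (hT : (T : F →ₗ[ℝ] F).IsSymmetric) (x : F) :
    HasGradientAt (quadratic T) (T x) x := by
  rw [hasGradientAt_iff_hasFDerivAt]
  refine ((T.hasFDerivAt.inner ℝ (hasFDerivAt_id x)).const_mul 2⁻¹).congr_fderiv ?_
  ext v
  have hsym : ⟪T v, x⟫ = ⟪T x, v⟫ := by rw [real_inner_comm]; exact (hT x v).symm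
  simp only [id_eq, smul_apply, ContinuousLinearMap.comp_apply, ContinuousLinearMap.prod_apply,
    ContinuousLinearMap.id_apply, fderivInnerCLM_apply, hsym, smul_eq_mul,
    InnerProductSpace.toDual_apply_apply]
  ring

lemma gradient_quadratic {T : F →L[ℝ] F} (hT : (T : F →ₗ[ℝ] F).IsSymmetric) :
    gradient (quadratic T) = T :=
  funext fun x => (hasGradientAt_quadratic hT x).gradient

end Quadratic

section Diagonal

open Matrix

variable {ι n : Type*} [Fintype n] [DecidableEq n]

lemma isSymmetric_toEuclideanCLM_diagonal (v : n → ℝ) :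
    ((toEuclideanCLM (𝕜 := ℝ) (diagonal v) : EuclideanSpace ℝ n →L[ℝ] EuclideanSpace ℝ n) :
      EuclideanSpace ℝ n →ₗ[ℝ] EuclideanSpace ℝ n).IsSymmetric :=
  isSymmetric_toEuclideanLin_iff.mpr (isHermitian_diagonal v)

lemma norm_sq_toEuclideanCLM_diagonal_apply (v : n → ℝ) (z : EuclideanSpace ℝ n) :
    ‖toEuclideanCLM (𝕜 := ℝ) (diagonal v) z‖ ^ 2 = ∑ j, v j ^ 2 * z j ^ 2 := by
  simp [EuclideanSpace.norm_sq_eq, mulVec_diagonal, mul_pow]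

lemma sum_norm_sq_toEuclideanCLM_diagonal_apply [Fintype ι] {d : ι → n → ℝ} {c : ℝ}
    (hc : ∀ j, ∑ i, d i j ^ 2 = c) (z : EuclideanSpace ℝ n) :
    ∑ i, ‖toEuclideanCLM (𝕜 := ℝ) (diagonal (d i)) z‖ ^ 2 = c * ‖z‖ ^ 2 := by
  simp_rw [norm_sq_toEuclideanCLM_diagonal_apply, EuclideanSpace.norm_sq_eq, Finset.mul_sum]
  rw [Finset.sum_comm]
  refine Finset.sum_congr rfl fun j _ => ?_
  rw [← Finset.sum_mul, hc, Real.norm_eq_abs, sq_abs]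

end Diagonal

lemma norm_fin_two (v : Fin 2 → ℝ) : ‖v‖ = max |v 0| |v 1| := by
  refine le_antisymm ((pi_norm_le_iff_of_nonneg (by positivity)).mpr ?_) ?_
  · simp only [Fin.forall_fin_two, ← Real.norm_eq_abs]
    exact ⟨le_max_left _ _, le_max_right _ _⟩
  · simpa only [← Real.norm_eq_abs] using max_le (norm_le_pi_norm v 0) (norm_le_pi_norm v 1)

def hessianDiagonals : Fin 3 → Fin 2 → ℝ := ![![3, 2], ![-1, 1], ![-2, -3]]

open Matrix in
theorem stmt_5 :
    ∃ h : Fin 3 → EuclideanSpace ℝ (Fin 2) → ℝ,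
      (∀ i, ContDiff ℝ 2 (h i)) ∧
      (∀ x y, (1 / 3 : ℝ) * ∑ i, ‖gradient (h i) x - gradient (h i) y‖ ^ 2 =
        14 / 3 * ‖x - y‖ ^ 2) ∧
      (∀ x, (1 / 3 : ℝ) * ∑ i, ‖fderiv ℝ (gradient (h i)) x‖ ^ 2 = 19 / 3) ∧
      (14 / 3 : ℝ) < 19 / 3 := by
  set A : Fin 3 → EuclideanSpace ℝ (Fin 2) →L[ℝ] EuclideanSpace ℝ (Fin 2) :=
    fun i => toEuclideanCLM (𝕜 := ℝ) (diagonal (hessianDiagonals i))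
  have hgrad : ∀ i, gradient (quadratic (A i)) = A i := fun i =>
    gradient_quadratic (isSymmetric_toEuclideanCLM_diagonal _)
  refine ⟨fun i => quadratic (A i), fun i => contDiff_quadratic _, fun x y => ?_, fun x => ?_,
    by norm_num⟩
  · have hcol : ∀ j, ∑ i, hessianDiagonals i j ^ 2 = 14 := by
      norm_num [Fin.forall_fin_two, Fin.sum_univ_three, hessianDiagonals, cons_val_two, vecHead,
        vecTail]
    simp only [hgrad, ← map_sub, A, sum_norm_sq_toEuclideanCLM_diagonal_apply hcol]
    ring
  · simp only [hgrad, ContinuousLinearMap.fderiv]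
    simp only [A, l2_opNorm_toEuclideanCLM, l2_opNorm_diagonal, norm_fin_two, Fin.sum_univ_three]
    norm_num [hessianDiagonals, cons_val_two, vecHead, vecTail]
end

section
/- Under δ_B-BHD and exact drift-corrected proximal descent (DANE+ with control variate h_{i,r} = ∇f_i(x^r) − ∇f(x^r)): if each local solution x_{i,r+1} satisfies F_{i,r}(x_{i,r+1}) ≤ F_{i,r}(x^r), where F_{i,r}(x) = f_i(x) − ⟨x, h_{i,r}⟩ + (λ/2)‖x − x^r‖², then f(x_{i,r+1}) + ((λ − δ_B)/2)‖x_{i,r+1} − x^r‖² ≤ f(x^r). -/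
/-!
The difference `g = f_i - f` has a `δ_B`-Lipschitz gradient, so the first-order Taylor remainder
of `g` is at most `δ_B/2 ‖y - x‖²` in absolute value. The drift correction makes the linear term
of the local objective exactly `⟨∇g(x^r), ·⟩`, so subtracting the lower Taylor bound for `g` from
the decrease `F_{i,r}(x_{i,r+1}) ≤ F_{i,r}(x^r)` leaves the claimed decrease of `f`.
-/

open InnerProductSpace Set
open scoped Gradient

section

variable {E : Type*} [NormedAddCommGroup E] [InnerProductSpace ℝ E] [CompleteSpace E]

theorem HasGradientAt.sub {φ ψ : E → ℝ} {φ' ψ' x : E} (hφ : HasGradientAt φ φ' x)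
    (hψ : HasGradientAt ψ ψ' x) : HasGradientAt (fun z => φ z - ψ z) (φ' - ψ') x := by
  rw [hasGradientAt_iff_hasFDerivAt, map_sub]
  exact hφ.hasFDerivAt.sub hψ.hasFDerivAt

theorem abs_sub_sub_inner_le_of_lipschitz_gradient {g : E → ℝ} {g' : E → E} {δ : ℝ}
    (hg : ∀ z, HasGradientAt g (g' z) z) (hlip : ∀ a b, ‖g' a - g' b‖ ≤ δ * ‖a - b‖)
    (x y : E) : |g y - g x - ⟪g' x, y - x⟫_ℝ| ≤ δ / 2 * ‖y - x‖ ^ 2 := by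
  set Δ := y - x
  -- fence the Taylor remainder along the segment against `δ/2 t² ‖Δ‖²`
  let ψ : ℝ → ℝ := fun t => g (x + t • Δ) - g x - t * ⟪g' x, Δ⟫_ℝ
  have hψ : ∀ t, HasDerivAt ψ (⟪g' (x + t • Δ) - g' x, Δ⟫_ℝ) t := by
    intro t
    have hline : HasDerivAt (fun t : ℝ => x + t • Δ) Δ t := by
      simpa using ((hasDerivAt_id t).smul_const Δ).const_add x
    exact ((((hg _).hasFDerivAt.comp_hasDerivAt t hline).sub_const (g x)).sub
      ((hasDerivAt_id t).mul_const ⟪g' x, Δ⟫_ℝ)).congr_deriv (by simp [inner_sub_left])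
  have hB : ∀ t, HasDerivAt (fun t : ℝ => δ / 2 * t ^ 2 * ‖Δ‖ ^ 2) (δ * t * ‖Δ‖ ^ 2) t := by
    intro t
    exact (((hasDerivAt_pow 2 t).const_mul (δ / 2)).mul_const (‖Δ‖ ^ 2)).congr_deriv
      (by simp only [Nat.cast_ofNat, Nat.add_one_sub_one, pow_one]; ring)
  have bound : ∀ t ∈ Ico (0 : ℝ) 1, ‖⟪g' (x + t • Δ) - g' x, Δ⟫_ℝ‖ ≤ δ * t * ‖Δ‖ ^ 2 := by
    rintro t ⟨ht, -⟩
    calc ‖⟪g' (x + t • Δ) - g' x, Δ⟫_ℝ‖ ≤ ‖g' (x + t • Δ) - g' x‖ * ‖Δ‖ := norm_inner_le_norm _ _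
      _ ≤ δ * ‖x + t • Δ - x‖ * ‖Δ‖ := by gcongr; exact hlip _ _
      _ = δ * t * ‖Δ‖ ^ 2 := by
        rw [add_sub_cancel_left, norm_smul, Real.norm_eq_abs, abs_of_nonneg ht]; ring
  have hfence := image_norm_le_of_norm_deriv_right_le_deriv_boundary
    (fun t _ => (hψ t).continuousAt.continuousWithinAt) (fun t _ => (hψ t).hasDerivWithinAt)
    (by simp [ψ]) hB bound (right_mem_Icc.2 zero_le_one)
  simpa [ψ, Δ] using hfence

theorem add_sq_norm_sub_le_of_proximal_decrease {φ ψ : E → ℝ} (hφ : Differentiable ℝ φ)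
    (hψ : Differentiable ℝ ψ) {δ lam : ℝ}
    (hlip : ∀ a b, ‖(∇ φ a - ∇ ψ a) - (∇ φ b - ∇ ψ b)‖ ≤ δ * ‖a - b‖) {x y : E}
    (hdec : φ y - ⟪y, ∇ φ x - ∇ ψ x⟫_ℝ + lam / 2 * ‖y - x‖ ^ 2
      ≤ φ x - ⟪x, ∇ φ x - ∇ ψ x⟫_ℝ) :
    ψ y + (lam - δ) / 2 * ‖y - x‖ ^ 2 ≤ ψ x := by
  have hremainder := abs_le.1 <| abs_sub_sub_inner_le_of_lipschitz_gradient
    (fun z => (hφ z).hasGradientAt.sub (hψ z).hasGradientAt) hlip x y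
  have hinner : ⟪∇ φ x - ∇ ψ x, y - x⟫_ℝ = ⟪y, ∇ φ x - ∇ ψ x⟫_ℝ - ⟪x, ∇ φ x - ∇ ψ x⟫_ℝ := by
    rw [inner_sub_right, real_inner_comm y, real_inner_comm x]
  linarith [hremainder.1]

end

theorem stmt_8_general {d n : ℕ} (f : Fin n → EuclideanSpace ℝ (Fin d) → ℝ)
    (hf : ∀ i, ContDiff ℝ 1 (f i)) (δB lam : ℝ)
    (fbar : EuclideanSpace ℝ (Fin d) → ℝ)
    (hfbar : fbar = fun x => (1 / (n : ℝ)) * ∑ i, f i x)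
    (hBHD : ∀ i, ∀ x y,
      ‖(gradient (f i) x - gradient fbar x) - (gradient (f i) y - gradient fbar y)‖
        ≤ δB * ‖x - y‖)
    (xr : EuclideanSpace ℝ (Fin d)) (i : Fin n)
    (F : EuclideanSpace ℝ (Fin d) → ℝ)
    (hF : F = fun z => f i z
        - (inner ℝ z (gradient (f i) xr - gradient fbar xr) : ℝ)
        + lam / 2 * ‖z - xr‖ ^ 2)
    (xnext : EuclideanSpace ℝ (Fin d)) (hdec : F xnext ≤ F xr) :
    fbar xnext + (lam - δB) / 2 * ‖xnext - xr‖ ^ 2 ≤ fbar xr := by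
  have hdiff : ∀ j, Differentiable ℝ (f j) := fun j => (hf j).differentiable one_ne_zero
  have hfbar_diff : Differentiable ℝ fbar := by
    rw [hfbar]
    exact (Differentiable.fun_sum fun j _ => hdiff j).const_mul _
  subst hF
  refine add_sq_norm_sub_le_of_proximal_decrease (hdiff i) hfbar_diff (hBHD i) ?_
  simpa using hdec

theorem stmt_8 {d n : ℕ} (hn : 0 < n) (f : Fin n → EuclideanSpace ℝ (Fin d) → ℝ)
    (hf : ∀ i, ContDiff ℝ 1 (f i)) (δB lam : ℝ) (hδ : 0 ≤ δB) (hlam : δB ≤ lam)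
    (fbar : EuclideanSpace ℝ (Fin d) → ℝ)
    (hfbar : fbar = fun x => (1 / (n : ℝ)) * ∑ i, f i x)
    (hBHD : ∀ i, ∀ x y,
      ‖(gradient (f i) x - gradient fbar x) - (gradient (f i) y - gradient fbar y)‖
        ≤ δB * ‖x - y‖)
    (xr : EuclideanSpace ℝ (Fin d)) (i : Fin n)
    (F : EuclideanSpace ℝ (Fin d) → ℝ)
    (hF : F = fun z => f i z
        - (inner ℝ z (gradient (f i) xr - gradient fbar xr) : ℝ)
        + lam / 2 * ‖z - xr‖ ^ 2)
    (xnext : EuclideanSpace ℝ (Fin d)) (hdec : F xnext ≤ F xr) :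
    fbar xnext + (lam - δB) / 2 * ‖xnext - xr‖ ^ 2 ≤ fbar xr :=
  stmt_8_general f hf δB lam fbar hfbar hBHD xr i F hF xnext hdec
end

section
/- (One-round convex contraction for DANE with exact solvers.) Let f_i be continuously differentiable and μ-convex (μ ≥ 0), f = (1/n)Σ f_i with minimizer x⋆, and assume δ_A-AHD: (1/n)Σ_i ‖∇(f_i − f)(x) − ∇(f_i − f)(y)‖² ≤ δ_A²‖x−y‖². With h_{i,r} = ∇f_i(x^r) − ∇f(x^r), λ ≥ δ_A, x_{i,r+1} = argmin F_{i,r}, and x^{r+1} = (1/n)Σ x_{i,r+1}: f(x^{r+1}) − f(x) ≤ (λ/2)‖x^r − x‖² − ((λ+μ)/2)‖x^{r+1} − x‖² for every x ∈ ℝ^d. -/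
/-!
Each `F_{i,r}` is `(μ + λ)`-strongly convex, so its minimizer satisfies
`F_{i,r}(x_{i,r+1}) + ((μ + λ)/2) ‖x - x_{i,r+1}‖² ≤ F_{i,r}(x)`. Summing over `i`, the linear
terms cancel because `Σ_i h_{i,r} = 0`, and `Σ_i ‖x_{i,r+1} - x‖² ≥ n ‖x^{r+1} - x‖²`.
It remains to see `Σ_i F_{i,r}(x_{i,r+1}) ≥ n f(x^{r+1})`: convexity of `f_i` at `x^{r+1}` leaves
the cross term `Σ_i ⟨∇(f_i - f)(x^{r+1}) - h_{i,r}, x_{i,r+1} - x^{r+1}⟩`, which Cauchy–Schwarz,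
`δ_A`-AHD between `x^{r+1}` and `x^r`, and `λ ≥ δ_A` bound below by
`-(λ/2) (n ‖x^{r+1} - x^r‖² + Σ_i ‖x_{i,r+1} - x^{r+1}‖²)`; this is exactly what the proximal
terms `(λ/2) Σ_i ‖x_{i,r+1} - x^r‖²` contribute.
-/

open Finset Filter Topology
open scoped InnerProductSpace

section InnerProductSpace

variable {E : Type*} [NormedAddCommGroup E] [InnerProductSpace ℝ E]

theorem strongConvexOn_univ_of_forall_le {f : E → ℝ} {g : E → E} {m : ℝ}
    (hf : ∀ x y, f x + ⟪g x, y - x⟫_ℝ + m / 2 * ‖x - y‖ ^ 2 ≤ f y) :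
    StrongConvexOn Set.univ m f := by
  refine ⟨convex_univ, fun x _ y _ a b ha hb hab => ?_⟩
  obtain rfl : b = 1 - a := by linarith
  set z := a • x + (1 - a) • y
  have hxz : x - z = (1 - a) • (x - y) := by module
  have hyz : y - z = (-a) • (x - y) := by module
  have hx := hf z x
  have hy := hf z y
  rw [hxz, norm_sub_rev, hxz, norm_smul, real_inner_smul_right, Real.norm_of_nonneg hb] at hx
  rw [hyz, norm_sub_rev, hyz, norm_smul, real_inner_smul_right, norm_neg,
    Real.norm_of_nonneg ha] at hy
  simp only [smul_eq_mul]
  -- the inner-product terms cancel in `a * hx + (1 - a) * hy`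
  nlinarith [mul_le_mul_of_nonneg_left hx ha, mul_le_mul_of_nonneg_left hy hb]

theorem StrongConvexOn.add_mul_norm_sub_sq_le_of_isMinOn {s : Set E} {f : E → ℝ} {m : ℝ}
    {x₀ x : E} (hf : StrongConvexOn s m f) (hmin : IsMinOn f s x₀) (hx₀ : x₀ ∈ s) (hx : x ∈ s) :
    f x₀ + m / 2 * ‖x - x₀‖ ^ 2 ≤ f x := by
  have hseg : ∀ t ∈ Set.Ioo (0 : ℝ) 1, f x₀ + (1 - t) * (m / 2 * ‖x - x₀‖ ^ 2) ≤ f x := by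
    rintro t ⟨ht₀, ht₁⟩
    have hconv := hf.2 hx hx₀ ht₀.le (sub_nonneg.2 ht₁.le) (add_sub_cancel t 1)
    have hle := hmin (hf.1 hx hx₀ ht₀.le (sub_nonneg.2 ht₁.le) (add_sub_cancel t 1))
    simp only [smul_eq_mul, Set.mem_ofPred_eq] at hconv hle
    nlinarith
  have hlim : Tendsto (fun t : ℝ => f x₀ + (1 - t) * (m / 2 * ‖x - x₀‖ ^ 2)) (𝓝[>] 0)
      (𝓝 (f x₀ + (1 - 0) * (m / 2 * ‖x - x₀‖ ^ 2))) :=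
    ((continuous_const.add ((continuous_const.sub continuous_id).mul continuous_const)).tendsto
      0).mono_left nhdsWithin_le_nhds
  simpa using le_of_tendsto hlim (eventually_of_mem (Ioo_mem_nhdsGT one_pos) hseg)

theorem sum_norm_sub_sq_eq_of_sum_sub_eq_zero {ι : Type*} [Fintype ι] {p : ι → E} {c : E}
    (hc : ∑ i, (p i - c) = 0) (y : E) :
    ∑ i, ‖p i - y‖ ^ 2 = ∑ i, ‖p i - c‖ ^ 2 + Fintype.card ι * ‖c - y‖ ^ 2 := by
  have hsplit : ∀ i, ‖p i - y‖ ^ 2 = ‖p i - c‖ ^ 2 + 2 * ⟪p i - c, c - y⟫_ℝ + ‖c - y‖ ^ 2 := by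
    intro i
    rw [← norm_add_sq_real, sub_add_sub_cancel]
  simp only [hsplit, sum_add_distrib, ← mul_sum, ← sum_inner, hc, inner_zero_left, sum_const,
    card_univ, nsmul_eq_mul]
  ring

theorem neg_le_sum_inner_of_sum_norm_sq_le {ι : Type*} [Fintype ι] {u v : ι → E} {lam U : ℝ}
    (hlam : 0 ≤ lam) (hU : 0 ≤ U) (hu : ∑ i, ‖u i‖ ^ 2 ≤ lam ^ 2 * U) :
    -(lam / 2 * (U + ∑ i, ‖v i‖ ^ 2)) ≤ ∑ i, ⟪u i, v i⟫_ℝ := by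
  set S := ∑ i, ‖v i‖ ^ 2
  have hS : 0 ≤ S := sum_nonneg fun i _ => sq_nonneg _
  have hcs : (∑ i, ‖u i‖ * ‖v i‖) ^ 2 ≤ (lam / 2 * (U + S)) ^ 2 :=
    calc (∑ i, ‖u i‖ * ‖v i‖) ^ 2 ≤ (∑ i, ‖u i‖ ^ 2) * S := sum_mul_sq_le_sq_mul_sq _ _ _
      _ ≤ lam ^ 2 * U * S := mul_le_mul_of_nonneg_right hu hS
      _ ≤ (lam / 2 * (U + S)) ^ 2 := by nlinarith [sq_nonneg (U - S), sq_nonneg lam]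
  have hnorm := (abs_le_of_sq_le_sq' hcs (by positivity)).2
  have hinner : ∑ i, -⟪u i, v i⟫_ℝ ≤ ∑ i, ‖u i‖ * ‖v i‖ :=
    sum_le_sum fun i _ => by simpa [inner_neg_left] using real_inner_le_norm (-u i) (v i)
  rw [sum_neg_distrib] at hinner
  linarith

theorem sum_sub_inv_card_smul_sum_eq_zero {ι : Type*} [Fintype ι] [Nonempty ι] (p : ι → E) :
    ∑ i, (p i - (Fintype.card ι : ℝ)⁻¹ • ∑ j, p j) = 0 := by
  rw [sum_sub_distrib, sum_const, card_univ, ← Nat.cast_smul_eq_nsmul ℝ, smul_smul,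
    mul_inv_cancel₀ (by positivity), one_smul, sub_self]

theorem sum_gradient_sub_gradient_mean_eq_zero [CompleteSpace E] {ι : Type*} [Fintype ι]
    [Nonempty ι] {f : ι → E → ℝ} {x : E} (hf : ∀ i, DifferentiableAt ℝ (f i) x) :
    ∑ i, (gradient (f i) x - gradient (fun y => 1 / (Fintype.card ι : ℝ) * ∑ j, f j y) x)
      = 0 := by
  have hmean : gradient (fun y => 1 / (Fintype.card ι : ℝ) * ∑ j, f j y) x
      = (Fintype.card ι : ℝ)⁻¹ • ∑ j, gradient (f j) x := by
    rw [gradient, fderiv_const_mul (DifferentiableAt.fun_sum fun j _ => hf j),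
      fderiv_fun_sum fun j _ => hf j, map_smul, map_sum, one_div]
    rfl
  rw [hmean]
  exact sum_sub_inv_card_smul_sum_eq_zero _

namespace DANE

-- `localObjective (f i) h_{i,r} x^r λ` is the paper's `F_{i,r}`.
noncomputable def localObjective (φ : E → ℝ) (h xr : E) (lam : ℝ) (z : E) : ℝ :=
  φ z - ⟪z, h⟫_ℝ + lam / 2 * ‖z - xr‖ ^ 2

theorem localObjective_add_inner_le {φ : E → ℝ} {g : E → E} {μ : ℝ}
    (hφ : ∀ x y, φ x + ⟪g x, y - x⟫_ℝ + μ / 2 * ‖x - y‖ ^ 2 ≤ φ y) (h xr : E) (lam : ℝ)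
    (x y : E) :
    localObjective φ h xr lam x + ⟪g x - h + lam • (x - xr), y - x⟫_ℝ
      + (μ + lam) / 2 * ‖x - y‖ ^ 2 ≤ localObjective φ h xr lam y := by
  have hquad : ‖y - xr‖ ^ 2 = ‖x - xr‖ ^ 2 + 2 * ⟪x - xr, y - x⟫_ℝ + ‖x - y‖ ^ 2 := by
    rw [norm_sub_rev x y, ← norm_add_sq_real, sub_add_sub_cancel']
  have hlin : ⟪y, h⟫_ℝ = ⟪x, h⟫_ℝ + ⟪h, y - x⟫_ℝ := by
    rw [inner_sub_right, real_inner_comm h y, real_inner_comm h x]; ring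
  have hφxy := hφ x y
  simp only [localObjective, inner_add_left, inner_sub_left, real_inner_smul_left] at hquad ⊢
  linear_combination hφxy - lam / 2 * hquad + hlin

theorem sum_le_sum_localObjective {ι : Type*} [Fintype ι] {f : ι → E → ℝ} {g : ι → E → E}
    (hf : ∀ i x y, f i x + ⟪g i x, y - x⟫_ℝ ≤ f i y) {h : ι → E} (hh : ∑ i, h i = 0)
    {lam : ℝ} (hlam : 0 ≤ lam) {xr c v : E} {xl : ι → E} (hc : ∑ i, (xl i - c) = 0)
    (hdis : ∑ i, ‖g i c - v - h i‖ ^ 2 ≤ lam ^ 2 * (Fintype.card ι * ‖c - xr‖ ^ 2)) :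
    ∑ i, f i c ≤ ∑ i, localObjective (f i) (h i) xr lam (xl i) := by
  have hlocal : ∀ i, f i c + ⟪g i c - v - h i, xl i - c⟫_ℝ + ⟪v, xl i - c⟫_ℝ - ⟪c, h i⟫_ℝ
      ≤ f i (xl i) - ⟪xl i, h i⟫_ℝ := by
    intro i
    have hfi := hf i c (xl i)
    have hxl : ⟪xl i, h i⟫_ℝ = ⟪c, h i⟫_ℝ + ⟪h i, xl i - c⟫_ℝ := by
      rw [inner_sub_right, real_inner_comm (h i), real_inner_comm (h i)]; ring
    rw [hxl, inner_sub_left, inner_sub_left]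
    linarith
  have hsum := sum_le_sum fun i (_ : i ∈ univ) => hlocal i
  simp only [sum_add_distrib, sum_sub_distrib, ← inner_sum, hc, hh, inner_zero_right] at hsum
  have hvar := sum_norm_sub_sq_eq_of_sum_sub_eq_zero hc xr
  have hcross := neg_le_sum_inner_of_sum_norm_sq_le (v := fun i => xl i - c) hlam
    (by positivity) hdis
  simp only [localObjective, sum_add_distrib, sum_sub_distrib, ← mul_sum]
  rw [hvar]
  linarith

theorem round_le {ι : Type*} [Fintype ι] [Nonempty ι] {f : ι → E → ℝ} {g : ι → E → E}
    {μ lam : ℝ} (hμ : 0 ≤ μ) (hlam : 0 ≤ lam)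
    (hf : ∀ i x y, f i x + ⟪g i x, y - x⟫_ℝ + μ / 2 * ‖x - y‖ ^ 2 ≤ f i y)
    {h : ι → E} (hh : ∑ i, h i = 0) {xr c v : E} {xl : ι → E}
    (hxl : ∀ i, IsMinOn (localObjective (f i) (h i) xr lam) Set.univ (xl i))
    (hc : ∑ i, (xl i - c) = 0)
    (hdis : 1 / (Fintype.card ι : ℝ) * ∑ i, ‖g i c - v - h i‖ ^ 2 ≤ lam ^ 2 * ‖c - xr‖ ^ 2)
    (x : E) :
    1 / (Fintype.card ι : ℝ) * ∑ i, f i c - 1 / (Fintype.card ι : ℝ) * ∑ i, f i x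
      ≤ lam / 2 * ‖xr - x‖ ^ 2 - (lam + μ) / 2 * ‖c - x‖ ^ 2 := by
  set N := (Fintype.card ι : ℝ)
  have hN : 0 < N := by positivity
  rw [one_div, inv_mul_le_iff₀ hN] at hdis
  have hcvx i x y : f i x + ⟪g i x, y - x⟫_ℝ ≤ f i y :=
    (le_add_of_nonneg_right (by positivity)).trans (hf i x y)
  have hlow := sum_le_sum_localObjective hcvx hh hlam hc (hdis.trans_eq (by ring))
  have hgrowth i : localObjective (f i) (h i) xr lam (xl i) + (μ + lam) / 2 * ‖xl i - x‖ ^ 2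
      ≤ localObjective (f i) (h i) xr lam x := by
    rw [norm_sub_rev]
    exact (strongConvexOn_univ_of_forall_le (localObjective_add_inner_le (hf i) (h i) xr lam)
      ).add_mul_norm_sub_sq_le_of_isMinOn (hxl i) trivial trivial
  have hsum := sum_le_sum fun i (_ : i ∈ univ) => hgrowth i
  rw [sum_add_distrib, ← mul_sum, sum_norm_sub_sq_eq_of_sum_sub_eq_zero hc x] at hsum
  have hval : ∑ i, localObjective (f i) (h i) xr lam x
      = ∑ i, f i x + N * (lam / 2 * ‖x - xr‖ ^ 2) := by
    simp only [localObjective, sum_add_distrib, sum_sub_distrib, ← inner_sum, hh,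
      inner_zero_right, sum_const, card_univ, nsmul_eq_mul, sub_zero, N]
  have hspread : 0 ≤ (μ + lam) / 2 * ∑ i, ‖xl i - c‖ ^ 2 := by positivity
  rw [← mul_sub, one_div, inv_mul_le_iff₀ hN, norm_sub_rev xr x]
  linarith

end DANE

end InnerProductSpace

theorem stmt_12_general {d n : ℕ} (hn : 0 < n) (f : Fin n → EuclideanSpace ℝ (Fin d) → ℝ)
    (hf : ∀ i, ContDiff ℝ 1 (f i)) (μ δA lam : ℝ) (hμ : 0 ≤ μ) (hδ : 0 ≤ δA)
    (hlam : δA ≤ lam)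
    (hconv : ∀ i, ∀ x y, f i y ≥ f i x + (inner ℝ (gradient (f i) x) (y - x) : ℝ)
        + μ / 2 * ‖x - y‖ ^ 2)
    (fbar : EuclideanSpace ℝ (Fin d) → ℝ)
    (hfbar : fbar = fun x => (1 / (n : ℝ)) * ∑ i, f i x)
    (hAHD : ∀ x y, (1 / (n : ℝ)) * ∑ i,
      ‖(gradient (f i) x - gradient fbar x) - (gradient (f i) y - gradient fbar y)‖ ^ 2
        ≤ δA ^ 2 * ‖x - y‖ ^ 2)
    (xr : EuclideanSpace ℝ (Fin d))
    (F : Fin n → EuclideanSpace ℝ (Fin d) → ℝ)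
    (hF : ∀ i, F i = fun z => f i z
        - (inner ℝ z (gradient (f i) xr - gradient fbar xr) : ℝ)
        + lam / 2 * ‖z - xr‖ ^ 2)
    (xl : Fin n → EuclideanSpace ℝ (Fin d))
    (hxl : ∀ i, ∀ y, F i (xl i) ≤ F i y)
    (xnext : EuclideanSpace ℝ (Fin d))
    (hxnext : xnext = (n : ℝ)⁻¹ • ∑ i, xl i) :
    ∀ x, fbar xnext - fbar x
      ≤ lam / 2 * ‖xr - x‖ ^ 2 - (lam + μ) / 2 * ‖xnext - x‖ ^ 2 := by
  have : Nonempty (Fin n) := ⟨⟨0, hn⟩⟩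
  have hcard : (Fintype.card (Fin n) : ℝ) = n := by rw [Fintype.card_fin]
  have hh : ∑ i, (gradient (f i) xr - gradient fbar xr) = 0 := by
    have := sum_gradient_sub_gradient_mean_eq_zero fun i =>
      ((hf i).differentiable one_ne_zero).differentiableAt (x := xr)
    rwa [hcard, ← hfbar] at this
  have hc : ∑ i, (xl i - xnext) = 0 := by
    have := sum_sub_inv_card_smul_sum_eq_zero xl
    rwa [hcard, ← hxnext] at this
  have hdis := (hAHD xnext xr).trans
    (mul_le_mul_of_nonneg_right (pow_le_pow_left₀ hδ hlam 2) (sq_nonneg _))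
  rw [← hcard] at hdis
  obtain rfl : F = fun i => DANE.localObjective (f i) _ xr lam := funext hF
  intro x
  have hround := DANE.round_le hμ (hδ.trans hlam) hconv hh
    (fun i => isMinOn_univ_iff.2 (hxl i)) hc hdis x
  rw [hcard] at hround
  rwa [hfbar]

theorem stmt_12 {d n : ℕ} (hn : 0 < n) (f : Fin n → EuclideanSpace ℝ (Fin d) → ℝ)
    (hf : ∀ i, ContDiff ℝ 1 (f i)) (μ δA lam : ℝ) (hμ : 0 ≤ μ) (hδ : 0 ≤ δA)
    (hlam : δA ≤ lam)
    (hconv : ∀ i, ∀ x y, f i y ≥ f i x + (inner ℝ (gradient (f i) x) (y - x) : ℝ)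
        + μ / 2 * ‖x - y‖ ^ 2)
    (fbar : EuclideanSpace ℝ (Fin d) → ℝ)
    (hfbar : fbar = fun x => (1 / (n : ℝ)) * ∑ i, f i x)
    (hAHD : ∀ x y, (1 / (n : ℝ)) * ∑ i,
      ‖(gradient (f i) x - gradient fbar x) - (gradient (f i) y - gradient fbar y)‖ ^ 2
        ≤ δA ^ 2 * ‖x - y‖ ^ 2)
    (xstar : EuclideanSpace ℝ (Fin d)) (hmin : ∀ y, fbar xstar ≤ fbar y)
    (xr : EuclideanSpace ℝ (Fin d))
    (F : Fin n → EuclideanSpace ℝ (Fin d) → ℝ)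
    (hF : ∀ i, F i = fun z => f i z
        - (inner ℝ z (gradient (f i) xr - gradient fbar xr) : ℝ)
        + lam / 2 * ‖z - xr‖ ^ 2)
    (xl : Fin n → EuclideanSpace ℝ (Fin d))
    (hxl : ∀ i, ∀ y, F i (xl i) ≤ F i y)
    (xnext : EuclideanSpace ℝ (Fin d))
    (hxnext : xnext = (n : ℝ)⁻¹ • ∑ i, xl i) :
    ∀ x, fbar xnext - fbar x
      ≤ lam / 2 * ‖xr - x‖ ^ 2 - (lam + μ) / 2 * ‖xnext - x‖ ^ 2 :=
  stmt_12_general hn f hf μ δA lam hμ hδ hlam hconv fbar hfbar hAHD xr F hF xl hxl xnext hxnext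
end

section
/- (Linear convergence of exact DANE for strongly convex functions.) Under the assumptions of the one-round contraction (δ_A-AHD, μ-strong convexity with μ > 0, λ ≥ δ_A, exact local minimization, standard averaging), after R rounds: f(x^R) − f(x⋆) + (μ/2)‖x^R − x⋆‖² ≤ (μ / (2[(1 + μ/λ)^R − 1])) ‖x^0 − x⋆‖² ≤ (λ/(2R))‖x^0 − x⋆‖². -/
/-!
Each local DANE objective `F_{i,r}` is `(μ + λ)`-strongly convex, so its exact minimizer
satisfies `F_{i,r}(xᵢ) + (μ + λ)/2 ‖y - xᵢ‖² ≤ F_{i,r}(y)` for every `y`. Averaging over the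
agents, the gradient corrections cancel, and the only cross term left,
`∑ ⟨∇fᵢ(x⁺) - ∇f(x⁺) - (∇fᵢ(x) - ∇f(x)), xᵢ - x⁺⟩`, is absorbed by Young's inequality and
δ-average Hessian dissimilarity because `δ ≤ λ`. This gives the one-round bound
`f(x⁺) + (μ + λ)/2 ‖y - x⁺‖² ≤ f(y) + λ/2 ‖y - x‖²`. With `y = x⋆` it is a contraction by
`1 + μ/λ` up to the function gap, and with `y = x` it makes `f(xʳ)` decrease; summing the
contractions with weights `(1 + μ/λ)ʳ` gives the rate, and Bernoulli's inequality the
`λ / (2R)` bound.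
-/

open Finset Filter Topology RealInnerProductSpace

section StrongConvexity

variable {E : Type*} [NormedAddCommGroup E] [InnerProductSpace ℝ E]

def FirstOrderStrongConvex (m : ℝ) (f : E → ℝ) (G : E → E) : Prop :=
  ∀ u v, f u + ⟪G u, v - u⟫ + m / 2 * ‖u - v‖ ^ 2 ≤ f v

theorem FirstOrderStrongConvex.strongConvexOn {m : ℝ} {f : E → ℝ} {G : E → E}
    (hf : FirstOrderStrongConvex m f G) : StrongConvexOn Set.univ m f := by
  refine ⟨convex_univ, fun x _ y _ a b ha hb hab => ?_⟩
  set w := a • x + b • y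
  have hxw : x - w = b • (x - y) := by
    simp only [w]; rw [← sub_eq_of_eq_add' hab.symm]; module
  have hyw : y - w = (-a) • (x - y) := by
    simp only [w]; rw [← sub_eq_of_eq_add hab.symm]; module
  have hx := hf w x
  have hy := hf w y
  rw [hxw, inner_smul_right, ← norm_neg, neg_sub, hxw, norm_smul] at hx
  rw [hyw, inner_smul_right, ← norm_neg, neg_sub, hyw, norm_smul, norm_neg] at hy
  simp only [Real.norm_eq_abs, abs_of_nonneg ha, abs_of_nonneg hb, smul_eq_mul] at hx hy ⊢
  obtain rfl : b = 1 - a := by linarith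
  linarith [mul_le_mul_of_nonneg_left hx ha, mul_le_mul_of_nonneg_left hy hb]

theorem StrongConvexOn.add_half_mul_norm_sub_sq_le_of_isMinOn {s : Set E} {m : ℝ} {f : E → ℝ}
    {z y : E} (hf : StrongConvexOn s m f) (hmin : IsMinOn f s z) (hz : z ∈ s) (hy : y ∈ s) :
    f z + m / 2 * ‖y - z‖ ^ 2 ≤ f y := by
  have hsegment : ∀ t ∈ Set.Ioc (0 : ℝ) 1, f z + (1 - t) * (m / 2 * ‖y - z‖ ^ 2) ≤ f y := by
    rintro t ⟨ht0, ht1⟩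
    have hconv := hf.2 hz hy (sub_nonneg.2 ht1) ht0.le (sub_add_cancel 1 t)
    have hle : f z ≤ f ((1 - t) • z + t • y) :=
      hmin (hf.1 hz hy (sub_nonneg.2 ht1) ht0.le (sub_add_cancel 1 t))
    rw [norm_sub_rev] at hconv
    simp only [smul_eq_mul] at hconv
    refine le_of_mul_le_mul_left ?_ ht0
    linarith
  have hlim : Tendsto (fun t : ℝ => f z + (1 - t) * (m / 2 * ‖y - z‖ ^ 2)) (𝓝[>] 0)
      (𝓝 (f z + m / 2 * ‖y - z‖ ^ 2)) := by
    refine tendsto_nhdsWithin_of_tendsto_nhds (Continuous.tendsto' ?_ _ _ (by simp))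
    fun_prop
  exact le_of_tendsto hlim (eventually_of_mem (Ioc_mem_nhdsGT zero_lt_one) hsegment)

theorem FirstOrderStrongConvex.add_half_mul_norm_sub_sq_le_of_forall_le {m : ℝ} {f : E → ℝ}
    {G : E → E} (hf : FirstOrderStrongConvex m f G) {z : E} (hz : ∀ y, f z ≤ f y) (y : E) :
    f z + m / 2 * ‖y - z‖ ^ 2 ≤ f y :=
  hf.strongConvexOn.add_half_mul_norm_sub_sq_le_of_isMinOn (fun y _ => hz y) trivial trivial

theorem neg_div_sub_le_real_inner (u v : E) {lam : ℝ} (hlam : 0 < lam) :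
    -(‖u‖ ^ 2 / (2 * lam)) - lam / 2 * ‖v‖ ^ 2 ≤ ⟪u, v⟫ := by
  have hsq : 0 ≤ ‖u + lam • v‖ ^ 2 := sq_nonneg _
  rw [norm_add_sq_real, inner_smul_right, norm_smul, mul_pow, Real.norm_eq_abs, sq_abs] at hsq
  have hexp : ⟪u, v⟫ - (-(‖u‖ ^ 2 / (2 * lam)) - lam / 2 * ‖v‖ ^ 2)
      = (‖u‖ ^ 2 + 2 * (lam * ⟪u, v⟫) + lam ^ 2 * ‖v‖ ^ 2) / (2 * lam) := by
    field_simp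
    ring
  rw [← sub_nonneg, hexp]
  positivity

end StrongConvexity

section Averaging

variable {E ι : Type*} [NormedAddCommGroup E] [InnerProductSpace ℝ E] [Fintype ι]

theorem sum_sub_inv_card_smul_sum [Nonempty ι] (v : ι → E) :
    ∑ i, (v i - (Fintype.card ι : ℝ)⁻¹ • ∑ j, v j) = 0 := by
  rw [sum_sub_distrib, sum_const, card_univ, ← Nat.cast_smul_eq_nsmul ℝ, smul_smul,
    mul_inv_cancel₀ (by positivity), one_smul, sub_self]

theorem sum_inner_sub_left_of_sum_eq_zero {v : ι → E} (hv : ∑ i, v i = 0) (w : ι → E) (a : E) :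
    ∑ i, ⟪w i - a, v i⟫ = ∑ i, ⟪w i, v i⟫ := by
  simp only [inner_sub_left, sum_sub_distrib, ← inner_sum, hv, inner_zero_right, sub_zero]

theorem sum_norm_sub_sq_of_sum_sub_eq_zero {p : ι → E} {a : E} (h : ∑ i, (p i - a) = 0)
    (y : E) : ∑ i, ‖y - p i‖ ^ 2 = Fintype.card ι * ‖y - a‖ ^ 2 + ∑ i, ‖p i - a‖ ^ 2 := by
  have hsplit : ∀ i, ‖y - p i‖ ^ 2 = ‖y - a‖ ^ 2 - 2 * ⟪y - a, p i - a⟫ + ‖p i - a‖ ^ 2 :=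
    fun i => by rw [← norm_sub_sq_real, sub_sub_sub_cancel_right]
  simp only [hsplit, sum_add_distrib, sum_sub_distrib, ← mul_sum, ← inner_sum, h,
    inner_zero_right, mul_zero, sub_zero, sum_const, card_univ, nsmul_eq_mul]

end Averaging

theorem gradient_const_mul_sum {F ι : Type*} [NormedAddCommGroup F] [InnerProductSpace ℝ F]
    [CompleteSpace F] (s : Finset ι) {f : ι → F → ℝ} (c : ℝ) {x : F}
    (hf : ∀ i ∈ s, DifferentiableAt ℝ (f i) x) :
    gradient (fun z => c * ∑ i ∈ s, f i z) x = c • ∑ i ∈ s, gradient (f i) x := by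
  rw [gradient, fderiv_const_mul (DifferentiableAt.fun_sum hf), fderiv_fun_sum hf, map_smul,
    map_sum]
  rfl

section Dane

variable {E : Type*} [NormedAddCommGroup E] [InnerProductSpace ℝ E]

noncomputable def daneLocalObjective (f : E → ℝ) (c : E) (lam : ℝ) (x z : E) : ℝ :=
  f z - ⟪z, c⟫ + lam / 2 * ‖z - x‖ ^ 2

theorem firstOrderStrongConvex_daneLocalObjective {μ : ℝ} {f : E → ℝ} {G : E → E}
    (hf : FirstOrderStrongConvex μ f G) (c : E) (lam : ℝ) (x : E) :
    FirstOrderStrongConvex (μ + lam) (daneLocalObjective f c lam x)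
      (fun u => G u - c + lam • (u - x)) := by
  intro u v
  have hsplit : ‖v - x‖ ^ 2 = ‖u - x‖ ^ 2 + 2 * ⟪u - x, v - u⟫ + ‖u - v‖ ^ 2 := by
    rw [show v - x = (u - x) + (v - u) by abel, norm_add_sq_real, norm_sub_rev u v]
  have hlin : ⟪v, c⟫ - ⟪u, c⟫ = ⟪c, v - u⟫ := by rw [← inner_sub_left, real_inner_comm]
  rw [inner_add_left, inner_sub_left, real_inner_smul_left]
  simp only [daneLocalObjective]
  rw [hsplit]
  linarith [hf u v]

theorem le_dane_cross_term {ι : Type*} [Fintype ι] [Nonempty ι] {g : ι → E → E}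
    {gbar : E → E} {δ lam : ℝ} (hδ : 0 ≤ δ) (hlam : δ ≤ lam) (hlam0 : 0 < lam)
    (hmean : ∀ z, ∑ i, (g i z - gbar z) = 0)
    (hAHD : ∀ z w, (1 / (Fintype.card ι : ℝ)) * ∑ i,
      ‖(g i z - gbar z) - (g i w - gbar w)‖ ^ 2 ≤ δ ^ 2 * ‖z - w‖ ^ 2)
    {x x' : E} {p : ι → E} (hu : ∑ i, (p i - x') = 0) :
    -(Fintype.card ι * (lam / 2 * ‖x' - x‖ ^ 2)) - lam / 2 * ∑ i, ‖p i - x'‖ ^ 2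
      ≤ ∑ i, ⟪g i x', p i - x'⟫ - ∑ i, ⟪p i, g i x - gbar x⟫ := by
  set n : ℝ := (Fintype.card ι : ℝ)
  have hn : 0 < n := by positivity
  set c : ι → E := fun i => g i x - gbar x
  set e : ι → E := fun i => (g i x' - gbar x') - c i
  have hcross : ∑ i, ⟪g i x', p i - x'⟫ - ∑ i, ⟪p i, c i⟫ = ∑ i, ⟪e i, p i - x'⟫ := by
    rw [← sum_inner_sub_left_of_sum_eq_zero hu (fun i => g i x') (gbar x'),
      ← sum_inner_sub_left_of_sum_eq_zero (hmean x) p x', ← sum_sub_distrib]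
    refine sum_congr rfl fun i _ => ?_
    rw [inner_sub_left (g i x' - gbar x') (c i), real_inner_comm (c i)]
  have hyoung := sum_le_sum fun i (_ : i ∈ univ) =>
    neg_div_sub_le_real_inner (e i) (p i - x') hlam0
  have hdissim : ∑ i, ‖e i‖ ^ 2 / (2 * lam) ≤ n * (lam / 2 * ‖x' - x‖ ^ 2) := by
    have hmean_dev := hAHD x' x
    rw [one_div, inv_mul_le_iff₀ (by positivity)] at hmean_dev
    rw [← sum_div, div_le_iff₀ (by positivity)]
    calc ∑ i, ‖e i‖ ^ 2 ≤ n * (δ ^ 2 * ‖x' - x‖ ^ 2) := hmean_dev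
      _ ≤ n * (lam ^ 2 * ‖x' - x‖ ^ 2) := by gcongr
      _ = n * (lam / 2 * ‖x' - x‖ ^ 2) * (2 * lam) := by ring
  rw [sum_sub_distrib, sum_neg_distrib, ← mul_sum] at hyoung
  linarith

theorem dane_round_le {ι : Type*} [Fintype ι] [Nonempty ι] {f : ι → E → ℝ} {fbar : E → ℝ}
    {g : ι → E → E} {gbar : E → E} {μ δ lam : ℝ} (hμ : 0 ≤ μ) (hδ : 0 ≤ δ) (hlam : δ ≤ lam)
    (hlam0 : 0 < lam) (hconv : ∀ i, FirstOrderStrongConvex μ (f i) (g i))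
    (hfbar : fbar = fun z => (1 / (Fintype.card ι : ℝ)) * ∑ i, f i z)
    (hmean : ∀ z, ∑ i, (g i z - gbar z) = 0)
    (hAHD : ∀ z w, (1 / (Fintype.card ι : ℝ)) * ∑ i,
      ‖(g i z - gbar z) - (g i w - gbar w)‖ ^ 2 ≤ δ ^ 2 * ‖z - w‖ ^ 2)
    {x x' : E} {p : ι → E}
    (hp : ∀ i y, daneLocalObjective (f i) (g i x - gbar x) lam x (p i)
      ≤ daneLocalObjective (f i) (g i x - gbar x) lam x y)
    (hx' : x' = (Fintype.card ι : ℝ)⁻¹ • ∑ i, p i) (y : E) :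
    fbar x' + (μ + lam) / 2 * ‖y - x'‖ ^ 2 ≤ fbar y + lam / 2 * ‖y - x‖ ^ 2 := by
  have hu : ∑ i, (p i - x') = 0 := hx' ▸ sum_sub_inv_card_smul_sum p
  have hcross := le_dane_cross_term hδ hlam hlam0 hmean hAHD (x := x) hu
  have hvar_x := sum_norm_sub_sq_of_sum_sub_eq_zero hu x
  have hvar_y := sum_norm_sub_sq_of_sum_sub_eq_zero hu y
  simp only [norm_sub_rev x] at hvar_x
  set n : ℝ := (Fintype.card ι : ℝ)
  have hn : 0 < n := by positivity
  set c : ι → E := fun i => g i x - gbar x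
  have hlocal := sum_le_sum fun i (_ : i ∈ univ) =>
    (firstOrderStrongConvex_daneLocalObjective (hconv i) (c i) lam x)
      |>.add_half_mul_norm_sub_sq_le_of_forall_le (hp i) y
  have hlower := sum_le_sum fun i (_ : i ∈ univ) => hconv i x' (p i)
  have hsum_f : ∀ z, ∑ i, f i z = n * fbar z := fun z => by
    rw [hfbar]; field_simp
  simp only [daneLocalObjective, sum_add_distrib, sum_sub_distrib, ← mul_sum, ← inner_sum,
    sum_const, card_univ, nsmul_eq_mul, hsum_f] at hlocal hlower
  simp only [show ∑ i, c i = 0 from hmean x, inner_zero_right, norm_sub_rev x' (p _), hvar_x,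
    hvar_y] at hlocal hlower
  have hV : 0 ≤ (μ + lam / 2) * ∑ i, ‖p i - x'‖ ^ 2 := by positivity
  refine le_of_mul_le_mul_left ?_ hn
  linarith

end Dane

section Rate

theorem potential_le_of_contraction {a b : ℕ → ℝ} {c ρ : ℝ} (hρ : 0 ≤ ρ)
    (hstep : ∀ r, a (r + 1) + c * ρ * b (r + 1) ≤ c * b r) (hmono : ∀ r, a (r + 1) ≤ a r)
    (m : ℕ) : c * ρ ^ m * b m + (∑ r ∈ range m, ρ ^ r) * a m ≤ c * b 0 := by
  induction m with
  | zero => simp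
  | succ k ih =>
    have hS : 0 ≤ ∑ r ∈ range k, ρ ^ r := sum_nonneg fun r _ => pow_nonneg hρ r
    calc c * ρ ^ (k + 1) * b (k + 1) + (∑ r ∈ range (k + 1), ρ ^ r) * a (k + 1)
        = ρ ^ k * (a (k + 1) + c * ρ * b (k + 1)) + (∑ r ∈ range k, ρ ^ r) * a (k + 1) := by
          rw [sum_range_succ]; ring
      _ ≤ ρ ^ k * (c * b k) + (∑ r ∈ range k, ρ ^ r) * a k := by
          gcongr
          · exact hstep k
          · exact hmono k
      _ ≤ c * b 0 := by linarith

theorem add_half_mul_le_of_contraction {a b : ℕ → ℝ} {μ lam : ℝ} (hμ : 0 < μ) (hlam : 0 < lam)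
    (hb : ∀ r, 0 ≤ b r) (hstep : ∀ r, a (r + 1) + (μ + lam) / 2 * b (r + 1) ≤ lam / 2 * b r)
    (hmono : ∀ r, a (r + 1) ≤ a r) {R : ℕ} (hR : R ≠ 0) :
    a R + μ / 2 * b R ≤ μ / (2 * ((1 + μ / lam) ^ R - 1)) * b 0 := by
  set ρ := 1 + μ / lam
  have hρ : 1 < ρ := lt_add_of_pos_right 1 (div_pos hμ hlam)
  have hcoef : lam / 2 * ρ = (μ + lam) / 2 := by simp only [ρ]; field_simp; ring
  have hpot := potential_le_of_contraction (c := lam / 2) (zero_le_one.trans hρ.le)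
    (fun r => hcoef ▸ hstep r) hmono R
  have hgeom : μ * ∑ r ∈ range R, ρ ^ r = lam * (ρ ^ R - 1) := by
    rw [← geom_sum_mul, show ρ - 1 = μ / lam by ring]; field_simp
  have hq : 0 < ρ ^ R - 1 := sub_pos.2 (one_lt_pow₀ hρ hR)
  rw [div_mul_eq_mul_div _ _ (b 0), le_div_iff₀ (by positivity)]
  refine le_of_mul_le_mul_left ?_ hlam
  have h1 := mul_le_mul_of_nonneg_left hpot (by positivity : 0 ≤ 2 * μ)
  have h2 : 0 ≤ μ * lam * b R := by have := hb R; positivity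
  have h3 : μ * (∑ r ∈ range R, ρ ^ r) * (2 * a R) = lam * (ρ ^ R - 1) * (2 * a R) := by
    rw [hgeom]
  linarith

theorem div_two_mul_one_add_div_pow_sub_one_le {μ lam : ℝ} (hμ : 0 < μ) (hlam : 0 < lam)
    {R : ℕ} (hR : R ≠ 0) : μ / (2 * ((1 + μ / lam) ^ R - 1)) ≤ lam / (2 * R) := by
  have hbern : 1 + R * (μ / lam) ≤ (1 + μ / lam) ^ R :=
    one_add_mul_le_pow (by linarith [div_pos hμ hlam]) R
  have hpos : 0 < R * (μ / lam) := by positivity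
  rw [div_le_div_iff₀ (by linarith) (by positivity)]
  calc μ * (2 * R) = lam * (2 * (R * (μ / lam))) := by field_simp
    _ ≤ lam * (2 * ((1 + μ / lam) ^ R - 1)) := by gcongr; linarith

end Rate

theorem stmt_13_general {d n : ℕ} (hn : 0 < n) (f : Fin n → EuclideanSpace ℝ (Fin d) → ℝ)
    (hf : ∀ i, ContDiff ℝ 1 (f i)) (μ δA lam : ℝ) (hμ : 0 < μ) (hδ : 0 ≤ δA)
    (hlam : δA ≤ lam) (hlam0 : 0 < lam)
    (hconv : ∀ i, ∀ x y, f i y ≥ f i x + (inner ℝ (gradient (f i) x) (y - x) : ℝ)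
        + μ / 2 * ‖x - y‖ ^ 2)
    (fbar : EuclideanSpace ℝ (Fin d) → ℝ)
    (hfbar : fbar = fun x => (1 / (n : ℝ)) * ∑ i, f i x)
    (hAHD : ∀ x y, (1 / (n : ℝ)) * ∑ i,
      ‖(gradient (f i) x - gradient fbar x) - (gradient (f i) y - gradient fbar y)‖ ^ 2
        ≤ δA ^ 2 * ‖x - y‖ ^ 2)
    (xstar : EuclideanSpace ℝ (Fin d))
    (x : ℕ → EuclideanSpace ℝ (Fin d))
    (xl : Fin n → ℕ → EuclideanSpace ℝ (Fin d))
    (F : Fin n → ℕ → EuclideanSpace ℝ (Fin d) → ℝ)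
    (hF : ∀ i r, F i r = fun z => f i z
        - (inner ℝ z (gradient (f i) (x r) - gradient fbar (x r)) : ℝ)
        + lam / 2 * ‖z - x r‖ ^ 2)
    (hxl : ∀ i r, ∀ y, F i r (xl i (r + 1)) ≤ F i r y)
    (havg : ∀ r : ℕ, x (r + 1) = (n : ℝ)⁻¹ • ∑ i, xl i (r + 1))
    (R : ℕ) (hR : 1 ≤ R) :
    fbar (x R) - fbar xstar + μ / 2 * ‖x R - xstar‖ ^ 2
      ≤ μ / (2 * ((1 + μ / lam) ^ R - 1)) * ‖x 0 - xstar‖ ^ 2 ∧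
    μ / (2 * ((1 + μ / lam) ^ R - 1)) * ‖x 0 - xstar‖ ^ 2
      ≤ lam / (2 * R) * ‖x 0 - xstar‖ ^ 2 := by
  have : Nonempty (Fin n) := ⟨⟨0, hn⟩⟩
  have hgrad : ∀ z, gradient fbar z = (n : ℝ)⁻¹ • ∑ i, gradient (f i) z := fun z => by
    rw [hfbar, gradient_const_mul_sum univ _ fun i _ =>
      ((hf i).differentiable one_ne_zero).differentiableAt, one_div]
  have hround : ∀ r y, fbar (x (r + 1)) + (μ + lam) / 2 * ‖y - x (r + 1)‖ ^ 2
      ≤ fbar y + lam / 2 * ‖y - x r‖ ^ 2 := fun r =>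
    dane_round_le hμ.le hδ hlam hlam0 (fun i => hconv i) (by simpa using hfbar)
      (fun z => by simpa [hgrad] using sum_sub_inv_card_smul_sum fun i => gradient (f i) z)
      (by simpa using hAHD) (fun i => hF i r ▸ hxl i r) (by simpa using havg r)
  have hR0 : R ≠ 0 := by omega
  refine ⟨add_half_mul_le_of_contraction (a := fun r => fbar (x r) - fbar xstar)
    (b := fun r => ‖x r - xstar‖ ^ 2) hμ hlam0
    (fun r => sq_nonneg _) (fun r => ?_) (fun r => ?_) hR0,
    mul_le_mul_of_nonneg_right (div_two_mul_one_add_div_pow_sub_one_le hμ hlam0 hR0)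
      (sq_nonneg _)⟩
  · have h := hround r xstar
    rw [norm_sub_rev xstar, norm_sub_rev xstar] at h
    linarith
  · have h := hround r (x r)
    rw [sub_self, norm_zero] at h
    have : 0 ≤ (μ + lam) / 2 * ‖x r - x (r + 1)‖ ^ 2 := by positivity
    linarith

theorem stmt_13 {d n : ℕ} (hn : 0 < n) (f : Fin n → EuclideanSpace ℝ (Fin d) → ℝ)
    (hf : ∀ i, ContDiff ℝ 1 (f i)) (μ δA lam : ℝ) (hμ : 0 < μ) (hδ : 0 ≤ δA)
    (hlam : δA ≤ lam) (hlam0 : 0 < lam)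
    (hconv : ∀ i, ∀ x y, f i y ≥ f i x + (inner ℝ (gradient (f i) x) (y - x) : ℝ)
        + μ / 2 * ‖x - y‖ ^ 2)
    (fbar : EuclideanSpace ℝ (Fin d) → ℝ)
    (hfbar : fbar = fun x => (1 / (n : ℝ)) * ∑ i, f i x)
    (hAHD : ∀ x y, (1 / (n : ℝ)) * ∑ i,
      ‖(gradient (f i) x - gradient fbar x) - (gradient (f i) y - gradient fbar y)‖ ^ 2
        ≤ δA ^ 2 * ‖x - y‖ ^ 2)
    (xstar : EuclideanSpace ℝ (Fin d)) (hmin : ∀ y, fbar xstar ≤ fbar y)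
    (x : ℕ → EuclideanSpace ℝ (Fin d))
    (xl : Fin n → ℕ → EuclideanSpace ℝ (Fin d))
    (F : Fin n → ℕ → EuclideanSpace ℝ (Fin d) → ℝ)
    (hF : ∀ i r, F i r = fun z => f i z
        - (inner ℝ z (gradient (f i) (x r) - gradient fbar (x r)) : ℝ)
        + lam / 2 * ‖z - x r‖ ^ 2)
    (hxl : ∀ i r, ∀ y, F i r (xl i (r + 1)) ≤ F i r y)
    (havg : ∀ r : ℕ, x (r + 1) = (n : ℝ)⁻¹ • ∑ i, xl i (r + 1))
    (R : ℕ) (hR : 1 ≤ R) :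
    fbar (x R) - fbar xstar + μ / 2 * ‖x R - xstar‖ ^ 2
      ≤ μ / (2 * ((1 + μ / lam) ^ R - 1)) * ‖x 0 - xstar‖ ^ 2 ∧
    μ / (2 * ((1 + μ / lam) ^ R - 1)) * ‖x 0 - xstar‖ ^ 2
      ≤ lam / (2 * R) * ‖x 0 - xstar‖ ^ 2 :=
  stmt_13_general hn f hf μ δA lam hμ hδ hlam hlam0 hconv fbar hfbar hAHD xstar x xl F hF hxl havg R
    hR
end

section
/- (Error-accumulation bound for inexact DANE+, convex case.) Let A_r, B_r, C_r ≥ 0 and 0 < q < 1 with q = λ/(λ+μ), and suppose the sequence Q_R := A_0 + (2/(μ+λ)) Σ_{r=1}^R √(C_r A_r)/q^r satisfies A_R/q^R ≤ Q_R for all R ≥ 1. Then Q_R ≤ 2A_0 + (4/(μ+λ)²) (Σ_{r=1}^R √(C_r/q^r))². -/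
open Finset

/- Every term of the error sum is controlled through the hypothesis by the final value:
√(C_r A_r)/q^r = √(C_r/q^r) √(A_r/q^r) ≤ √(C_r/q^r) √Q_r ≤ √(C_r/q^r) √Q_R, since Q is nondecreasing.
Hence Q_R ≤ A_0 + b √Q_R with b = (2/(μ+λ)) Σ √(C_r/q^r), and b √Q_R ≤ (b² + Q_R)/2 gives
Q_R ≤ 2A_0 + b². -/

theorem le_two_mul_add_sq_of_le_add_mul_sqrt {x a b : ℝ} (hx : 0 ≤ x)
    (h : x ≤ a + b * √x) : x ≤ 2 * a + b ^ 2 := by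
  nlinarith [sq_nonneg (b - √x), Real.sq_sqrt hx]

theorem monotone_sum_Icc_of_nonneg {M : Type*} [AddCommMonoid M] [PartialOrder M]
    [IsOrderedAddMonoid M] {f : ℕ → M} (hf : ∀ i, 0 ≤ f i) (a : ℕ) :
    Monotone fun n => ∑ i ∈ Icc a n, f i :=
  fun _ _ hmn => sum_le_sum_of_subset_of_nonneg (Icc_subset_Icc_right hmn) fun i _ _ => hf i

theorem sqrt_mul_div_le_sqrt_div_mul_sqrt {a c p Q : ℝ} (ha : 0 ≤ a) (hp : 0 < p)
    (h : a / p ≤ Q) : √(c * a) / p ≤ √(c / p) * √Q := by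
  have hsplit : √(c * a) / p = √(c / p) * √(a / p) := by
    rw [← Real.sqrt_mul' _ (div_nonneg ha hp.le), div_mul_div_comm,
      Real.sqrt_div' _ (mul_self_nonneg p), Real.sqrt_mul_self hp.le]
  rw [hsplit]
  exact mul_le_mul_of_nonneg_left (Real.sqrt_le_sqrt h) (Real.sqrt_nonneg _)

theorem stmt_19_general (μ lam : ℝ) (hμ : 0 ≤ μ) (hlam : 0 < lam)
    (A C : ℕ → ℝ) (hA : ∀ r, 0 ≤ A r)
    (q : ℝ) (hq : q = lam / (lam + μ))
    (Q : ℕ → ℝ)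
    (hQ : ∀ R : ℕ, Q R = A 0 + 2 / (μ + lam) *
      ∑ r ∈ Finset.Icc 1 R, Real.sqrt (C r * A r) / q ^ r)
    (hrec : ∀ R : ℕ, 1 ≤ R → A R / q ^ R ≤ Q R) :
    ∀ R : ℕ, 1 ≤ R →
      Q R ≤ 2 * A 0 + 4 / (μ + lam) ^ 2 *
        (∑ r ∈ Finset.Icc 1 R, Real.sqrt (C r / q ^ r)) ^ 2 := by
  intro R hR
  have hq0 : 0 < q := by rw [hq]; positivity
  have hmono : Monotone Q := by
    intro m n hmn
    rw [hQ m, hQ n]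
    gcongr _ + _ * ?_
    exact monotone_sum_Icc_of_nonneg (fun r => by positivity) 1 hmn
  have hQR : 0 ≤ Q R :=
    (hA 0).trans (by simpa [hQ 0] using hmono (Nat.zero_le R))
  set T := ∑ r ∈ Icc 1 R, √(C r / q ^ r)
  have hsum : ∑ r ∈ Icc 1 R, √(C r * A r) / q ^ r ≤ T * √(Q R) := by
    rw [sum_mul]
    refine sum_le_sum fun r hr => sqrt_mul_div_le_sqrt_div_mul_sqrt (hA r) (pow_pos hq0 r) ?_
    rw [mem_Icc] at hr
    exact (hrec r hr.1).trans (hmono hr.2)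
  have hQR_le : Q R ≤ A 0 + (2 / (μ + lam) * T) * √(Q R) := by
    calc Q R = A 0 + 2 / (μ + lam) * ∑ r ∈ Icc 1 R, √(C r * A r) / q ^ r := hQ R
      _ ≤ A 0 + 2 / (μ + lam) * (T * √(Q R)) := by gcongr
      _ = A 0 + (2 / (μ + lam) * T) * √(Q R) := by ring
  calc Q R ≤ 2 * A 0 + (2 / (μ + lam) * T) ^ 2 :=
        le_two_mul_add_sq_of_le_add_mul_sqrt hQR hQR_le
    _ = 2 * A 0 + 4 / (μ + lam) ^ 2 * T ^ 2 := by rw [mul_pow, div_pow]; norm_num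

theorem stmt_19 (μ lam : ℝ) (hμ : 0 ≤ μ) (hlam : 0 < lam)
    (A C : ℕ → ℝ) (hA : ∀ r, 0 ≤ A r) (hC : ∀ r, 0 ≤ C r)
    (q : ℝ) (hq : q = lam / (lam + μ))
    (Q : ℕ → ℝ)
    (hQ : ∀ R : ℕ, Q R = A 0 + 2 / (μ + lam) *
      ∑ r ∈ Finset.Icc 1 R, Real.sqrt (C r * A r) / q ^ r)
    (hrec : ∀ R : ℕ, 1 ≤ R → A R / q ^ R ≤ Q R) :
    ∀ R : ℕ, 1 ≤ R →
      Q R ≤ 2 * A 0 + 4 / (μ + lam) ^ 2 *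
        (∑ r ∈ Finset.Icc 1 R, Real.sqrt (C r / q ^ r)) ^ 2 :=
  stmt_19_general μ lam hμ hlam A C hA q hq Q hQ hrec
end
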